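/- If E is a reflexive Banach space, then the Banach algebra B(E) of bounded linear operators on E is a dual Banach space, with predual the projective tensor product E* ⊗̂ E; that is, B(E) is isometrically isomorphic to the dual of E* ⊗̂ E. -/

import Mathlib

open scoped TensorProduct

/-- The duality pairing between `B(E)` and `E* ⊗ E`, `⟨T, f ⊗ x⟩ = f (T x)`. -/
noncomputable def dualPairing {E : Type*} [NormedAddCommGroup E] [NormedSpace ℂ E]
    (T : E →L[ℂ] E) : (StrongDual ℂ E) ⊗[ℂ] E →ₗ[ℂ] ℂ :=
  TensorProduct.lift
    (LinearMap.mk₂ ℂ (fun f x => f (T x))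
      (fun f g x => by simp)
      (fun c f x => by simp)
      (fun f x y => by simp)
      (fun c f x => by simp))

/-- The projective tensor norm on `E* ⊗ E`: the infimum of `∑ ‖fᵢ‖ ‖xᵢ‖` over all finite
representations `u = ∑ fᵢ ⊗ xᵢ`. -/
noncomputable def projNorm {E : Type*} [NormedAddCommGroup E] [NormedSpace ℂ E]
    (u : (StrongDual ℂ E) ⊗[ℂ] E) : ℝ :=
  sInf {r : ℝ | ∃ (m : ℕ) (f : Fin m → StrongDual ℂ E) (x : Fin m → E),
    u = ∑ i, f i ⊗ₜ[ℂ] x i ∧ r = ∑ i, ‖f i‖ * ‖x i‖}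

section Aux

variable {E : Type*} [NormedAddCommGroup E] [NormedSpace ℂ E]

lemma dualPairing_tmul (T : E →L[ℂ] E) (f : StrongDual ℂ E) (x : E) :
    dualPairing T (f ⊗ₜ[ℂ] x) = f (T x) := rfl

/-- The defining set for the projective norm. -/
def projSet (u : (StrongDual ℂ E) ⊗[ℂ] E) : Set ℝ :=
  {r : ℝ | ∃ (m : ℕ) (f : Fin m → StrongDual ℂ E) (x : Fin m → E),
    u = ∑ i, f i ⊗ₜ[ℂ] x i ∧ r = ∑ i, ‖f i‖ * ‖x i‖}

lemma projNorm_eq (u : (StrongDual ℂ E) ⊗[ℂ] E) : projNorm u = sInf (projSet u) := rfl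

lemma exists_rep (u : (StrongDual ℂ E) ⊗[ℂ] E) :
    ∃ (m : ℕ) (f : Fin m → StrongDual ℂ E) (x : Fin m → E),
      u = ∑ i, f i ⊗ₜ[ℂ] x i := by
  induction u using TensorProduct.induction_on with
  | zero => exact ⟨0, ![], ![], by simp⟩
  | tmul f x =>
    exact ⟨1, fun _ => f, fun _ => x, by simp⟩
  | add u v hu hv =>
    obtain ⟨m, f, x, rfl⟩ := hu
    obtain ⟨n, g, y, rfl⟩ := hv
    refine ⟨m + n, Fin.append f g, Fin.append x y, ?_⟩
    rw [Fin.sum_univ_add]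
    simp

lemma projSet_nonempty (u : (StrongDual ℂ E) ⊗[ℂ] E) : (projSet u).Nonempty := by
  obtain ⟨m, f, x, h⟩ := exists_rep u
  exact ⟨∑ i, ‖f i‖ * ‖x i‖, m, f, x, h, rfl⟩

lemma projSet_nonneg {u : (StrongDual ℂ E) ⊗[ℂ] E} {r : ℝ} (hr : r ∈ projSet u) :
    0 ≤ r := by
  obtain ⟨m, f, x, -, rfl⟩ := hr
  exact Finset.sum_nonneg fun i _ => mul_nonneg (norm_nonneg _) (norm_nonneg _)

lemma projSet_bddBelow (u : (StrongDual ℂ E) ⊗[ℂ] E) : BddBelow (projSet u) :=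
  ⟨0, fun r hr => projSet_nonneg hr⟩

lemma projNorm_nonneg (u : (StrongDual ℂ E) ⊗[ℂ] E) : 0 ≤ projNorm u :=
  le_csInf (projSet_nonempty u) fun _ hr => projSet_nonneg hr

lemma projNorm_tmul_le (f : StrongDual ℂ E) (x : E) :
    projNorm (f ⊗ₜ[ℂ] x) ≤ ‖f‖ * ‖x‖ := by
  refine csInf_le (projSet_bddBelow _) ?_
  exact ⟨1, fun _ => f, fun _ => x, by simp, by simp⟩

lemma projNorm_zero : projNorm (0 : (StrongDual ℂ E) ⊗[ℂ] E) ≤ 0 := by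
  refine csInf_le (projSet_bddBelow _) ?_
  exact ⟨0, ![], ![], by simp, by simp⟩

lemma dualPairing_le_mem (T : E →L[ℂ] E) (u : (StrongDual ℂ E) ⊗[ℂ] E)
    {r : ℝ} (hr : r ∈ projSet u) : ‖dualPairing T u‖ ≤ ‖T‖ * r := by
  obtain ⟨m, f, x, rfl, rfl⟩ := hr
  rw [map_sum]
  calc ‖∑ i, dualPairing T (f i ⊗ₜ[ℂ] x i)‖
      ≤ ∑ i, ‖dualPairing T (f i ⊗ₜ[ℂ] x i)‖ := norm_sum_le _ _
    _ ≤ ∑ i, ‖T‖ * (‖f i‖ * ‖x i‖) := by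
        refine Finset.sum_le_sum fun i _ => ?_
        rw [dualPairing_tmul]
        calc ‖(f i) (T (x i))‖ ≤ ‖f i‖ * ‖T (x i)‖ := (f i).le_opNorm _
          _ ≤ ‖f i‖ * (‖T‖ * ‖x i‖) :=
              mul_le_mul_of_nonneg_left (T.le_opNorm _) (norm_nonneg _)
          _ = ‖T‖ * (‖f i‖ * ‖x i‖) := by ring
    _ = ‖T‖ * ∑ i, ‖f i‖ * ‖x i‖ := by rw [Finset.mul_sum]

lemma dualPairing_le (T : E →L[ℂ] E) (u : (StrongDual ℂ E) ⊗[ℂ] E) :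
    ‖dualPairing T u‖ ≤ ‖T‖ * projNorm u := by
  have key : ∀ ε > (0:ℝ), ‖dualPairing T u‖ ≤ ‖T‖ * projNorm u + ε := by
    intro ε hε
    have hε' : 0 < ε / (‖T‖ + 1) := by positivity
    obtain ⟨r, hr, hrlt⟩ := Real.lt_sInf_add_pos (projSet_nonempty u) hε'
    calc ‖dualPairing T u‖ ≤ ‖T‖ * r := dualPairing_le_mem T u hr
      _ ≤ ‖T‖ * (sInf (projSet u) + ε / (‖T‖ + 1)) :=
          mul_le_mul_of_nonneg_left hrlt.le (norm_nonneg _)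
      _ = ‖T‖ * sInf (projSet u) + ‖T‖ * (ε / (‖T‖ + 1)) := by ring
      _ ≤ ‖T‖ * projNorm u + ε := by
          rw [projNorm_eq]
          have h1 : ‖T‖ * (ε / (‖T‖ + 1)) ≤ ε := by
            rw [mul_div_assoc']
            rw [div_le_iff₀ (by positivity)]
            nlinarith [norm_nonneg T]
          linarith
  by_contra h
  push_neg at h
  have := key ((‖dualPairing T u‖ - ‖T‖ * projNorm u) / 2) (by linarith)
  linarith

end Aux

/-- If `E` is a reflexive (complex) Banach space, then `B(E)` is isometrically isomorphic to
the dual of the projective tensor product `E* ⊗̂ E`, via the pairing `⟨T, f ⊗ x⟩ = f (T x)`: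
the pairing is isometric (the operator norm of `T` is the supremum of `|⟨T, u⟩|` over the
projective unit ball) and every functional on `E* ⊗ E` bounded for the projective norm arises
from a unique `T ∈ B(E)`. -/
theorem stmt0 {E : Type*} [NormedAddCommGroup E] [NormedSpace ℂ E] [CompleteSpace E]
    (hrefl : Function.Surjective (NormedSpace.inclusionInDoubleDual ℂ E)) :
    (∀ T : E →L[ℂ] E,
      ‖T‖ = sSup {r : ℝ | ∃ u, projNorm u ≤ 1 ∧ r = ‖dualPairing T u‖}) ∧
    (∀ ψ : (StrongDual ℂ E) ⊗[ℂ] E →ₗ[ℂ] ℂ,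
      (∃ C : ℝ, ∀ u, ‖ψ u‖ ≤ C * projNorm u) →
        ∃! T : E →L[ℂ] E, ∀ u, dualPairing T u = ψ u) := by
  constructor
  · -- isometry
    intro T
    set S : Set ℝ := {r : ℝ | ∃ u, projNorm u ≤ 1 ∧ r = ‖dualPairing T u‖} with hS
    have h0 : (0 : ℝ) ∈ S := by
      refine ⟨0, le_trans projNorm_zero zero_le_one, ?_⟩
      simp
    have hub : ∀ r ∈ S, r ≤ ‖T‖ := by
      rintro r ⟨u, hu, rfl⟩
      calc ‖dualPairing T u‖ ≤ ‖T‖ * projNorm u := dualPairing_le T u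
        _ ≤ ‖T‖ * 1 := mul_le_mul_of_nonneg_left hu (norm_nonneg _)
        _ = ‖T‖ := mul_one _
    have hbdd : BddAbove S := ⟨‖T‖, hub⟩
    have hne : S.Nonempty := ⟨0, h0⟩
    refine le_antisymm ?_ (csSup_le hne hub)
    have hsup0 : 0 ≤ sSup S := le_csSup hbdd h0
    refine T.opNorm_le_bound hsup0 fun x => ?_
    by_cases hTx : T x = 0
    · rw [hTx]; simp; positivity
    have hx : x ≠ 0 := by rintro rfl; simp at hTx
    have hxn : (0:ℝ) < ‖x‖ := norm_pos_iff.mpr hx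
    obtain ⟨g, hg1, hgx⟩ := exists_dual_vector ℂ (T x) (norm_ne_zero_iff.mpr hTx)
    set c : ℂ := (‖x‖ : ℂ)⁻¹ with hc
    have hcn : ‖c‖ = ‖x‖⁻¹ := by
      rw [hc, norm_inv, Complex.norm_real, Real.norm_of_nonneg hxn.le]
    have hmem : ‖x‖⁻¹ * ‖T x‖ ∈ S := by
      refine ⟨g ⊗ₜ[ℂ] (c • x), ?_, ?_⟩
      · calc projNorm (g ⊗ₜ[ℂ] (c • x)) ≤ ‖g‖ * ‖c • x‖ := projNorm_tmul_le _ _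
          _ = 1 := by
            rw [hg1, one_mul, norm_smul, hcn]
            field_simp
      · rw [dualPairing_tmul, map_smul, map_smul, hgx, smul_eq_mul, norm_mul, hcn]
        simp [abs_of_nonneg (norm_nonneg (T x))]
    have := le_csSup hbdd hmem
    calc ‖T x‖ = (‖x‖⁻¹ * ‖T x‖) * ‖x‖ := by field_simp
      _ ≤ sSup S * ‖x‖ := mul_le_mul_of_nonneg_right this hxn.le
  · -- surjectivity onto bounded functionals
    intro ψ ⟨C, hC⟩
    set C' : ℝ := max C 0 with hC'
    have hC'0 : 0 ≤ C' := le_max_right _ _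
    have hbound : ∀ (f : StrongDual ℂ E) (x : E),
        ‖ψ (f ⊗ₜ[ℂ] x)‖ ≤ C' * ‖x‖ * ‖f‖ := by
      intro f x
      calc ‖ψ (f ⊗ₜ[ℂ] x)‖ ≤ C * projNorm (f ⊗ₜ[ℂ] x) := hC _
        _ ≤ C' * projNorm (f ⊗ₜ[ℂ] x) :=
            mul_le_mul_of_nonneg_right (le_max_left _ _) (projNorm_nonneg _)
        _ ≤ C' * (‖f‖ * ‖x‖) :=
            mul_le_mul_of_nonneg_left (projNorm_tmul_le _ _) hC'0
        _ = C' * ‖x‖ * ‖f‖ := by ring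
    -- the functional `f ↦ ψ (f ⊗ x)` in the double dual
    let g : E → StrongDual ℂ (StrongDual ℂ E) := fun x =>
      LinearMap.mkContinuous
        { toFun := fun f => ψ (f ⊗ₜ[ℂ] x)
          map_add' := fun f₁ f₂ => by
            show ψ ((f₁ + f₂) ⊗ₜ[ℂ] x) = ψ (f₁ ⊗ₜ[ℂ] x) + ψ (f₂ ⊗ₜ[ℂ] x)
            rw [TensorProduct.add_tmul, map_add]
          map_smul' := fun a f => by
            show ψ ((a • f) ⊗ₜ[ℂ] x) = a • ψ (f ⊗ₜ[ℂ] x)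
            rw [← TensorProduct.smul_tmul', map_smul] }
        (C' * ‖x‖) (fun f => hbound f x)
    have hg_apply : ∀ x f, g x f = ψ (f ⊗ₜ[ℂ] x) := fun _ _ => rfl
    let Jli : E →ₗᵢ[ℂ] StrongDual ℂ (StrongDual ℂ E) :=
      NormedSpace.inclusionInDoubleDualLi ℂ
    have hJsurj : Function.Surjective Jli := hrefl
    let Jeq := LinearIsometryEquiv.ofSurjective Jli hJsurj
    let Slin : E →ₗ[ℂ] StrongDual ℂ (StrongDual ℂ E) :=
      { toFun := g
        map_add' := fun x y => by
          ext f
          show ψ (f ⊗ₜ[ℂ] (x + y)) = ψ (f ⊗ₜ[ℂ] x) + ψ (f ⊗ₜ[ℂ] y)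
          rw [TensorProduct.tmul_add, map_add]
        map_smul' := fun a x => by
          ext f
          show ψ (f ⊗ₜ[ℂ] (a • x)) = a • ψ (f ⊗ₜ[ℂ] x)
          rw [TensorProduct.tmul_smul, map_smul] }
    have hSbound : ∀ x, ‖Slin x‖ ≤ C' * ‖x‖ := fun x =>
      LinearMap.mkContinuous_norm_le _ (by positivity) (fun f => hbound f x)
    let Scont : E →L[ℂ] StrongDual ℂ (StrongDual ℂ E) :=
      LinearMap.mkContinuous (F := StrongDual ℂ (StrongDual ℂ E)) Slin C' hSbound
    let T : E →L[ℂ] E :=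
      (Jeq.symm.toLinearIsometry.toContinuousLinearMap).comp Scont
    have hkey : ∀ (f : StrongDual ℂ E) (x : E), f (T x) = ψ (f ⊗ₜ[ℂ] x) := by
      intro f x
      have h1 : Jeq (T x) = g x := by
        show Jeq (Jeq.symm (Scont x)) = g x
        rw [Jeq.apply_symm_apply]
        rfl
      have h2 : Jeq (T x) f = f (T x) := rfl
      rw [← h2, h1, hg_apply]
    refine ⟨T, ?_, ?_⟩
    · intro u
      induction u using TensorProduct.induction_on with
      | zero => simp
      | tmul f x => rw [dualPairing_tmul, hkey]
      | add u v hu hv => rw [map_add, map_add, hu, hv]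
    · intro T' hT'
      ext x
      rw [NormedSpace.eq_iff_forall_dual_eq ℂ]
      intro f
      have h1 : f (T' x) = ψ (f ⊗ₜ[ℂ] x) := hT' (f ⊗ₜ[ℂ] x)
      rw [h1, ← hkey f x]
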